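/- For every natural number n, Σ_{k=0}^{n} 1/C(n,k) = ((n+1)/2^n) * Σ_{k=0}^{n} 2^k/(k+1). -/

import Mathlib

/-! Adding the reciprocals of two adjacent entries of row `n + 1` gives `(n + 2) / (n + 1)` times
a reciprocal from row `n`, so `S (n + 1) = (n + 2) / (2 (n + 1)) * S n + 1`. The right-hand side
satisfies the same recurrence, as its sum gains the term `2 ^ (n + 1) / (n + 2)`. -/

open Finset

variable {K : Type*} [Field K] [CharZero K]

-- Both sides equal `k! (n - k)! (n + 2) / (n + 1)!`.
theorem inv_choose_succ_add_inv_choose_succ_succ {n k : ℕ} (h : k ≤ n) :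
    (1 : K) / (n + 1).choose k + 1 / (n + 1).choose (k + 1) =
      (n + 2) / (n + 1) * (1 / n.choose k) := by
  rw [Nat.cast_choose K h, Nat.cast_choose K (Nat.succ_le_succ h),
    Nat.cast_choose K (h.trans n.le_succ), Nat.succ_sub_succ, Nat.succ_sub h]
  simp only [Nat.factorial_succ]
  push_cast [Nat.cast_sub h]
  field_simp
  ring

theorem sum_range_inv_choose_succ (n : ℕ) :
    ∑ k ∈ range (n + 2), (1 : K) / (n + 1).choose k =
      (n + 2) / (2 * (n + 1)) * ∑ k ∈ range (n + 1), (1 : K) / n.choose k + 1 := by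
  have pairs : ∑ k ∈ range (n + 1), (1 : K) / (n + 1).choose k +
      ∑ k ∈ range (n + 1), (1 : K) / (n + 1).choose (k + 1) =
        (n + 2) / (n + 1) * ∑ k ∈ range (n + 1), (1 : K) / n.choose k := by
    rw [← sum_add_distrib, mul_sum]
    exact sum_congr rfl fun k hk ↦
      inv_choose_succ_add_inv_choose_succ_succ (Nat.lt_succ_iff.mp (mem_range.mp hk))
  -- Peel the last term off one copy of the sum and the first term off the other.
  have twice := congrArg₂ (· + ·) (sum_range_succ (fun k ↦ (1 : K) / (n + 1).choose k) (n + 1))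
    (sum_range_succ' (fun k ↦ (1 : K) / (n + 1).choose k) (n + 1))
  simp only [Nat.choose_self, Nat.choose_zero_right, Nat.cast_one, div_one] at twice
  rw [mul_comm 2, ← div_div]
  linear_combination (twice + pairs) / 2

theorem stmt_1 (n : ℕ) :
    ∑ k ∈ Finset.range (n + 1), (1 : ℝ) / n.choose k =
      ((n + 1 : ℝ) / 2 ^ n) * ∑ k ∈ Finset.range (n + 1), (2 : ℝ) ^ k / (k + 1) := by
  induction n with
  | zero => simp
  | succ n ih =>
    rw [sum_range_inv_choose_succ, ih, sum_range_succ _ (n + 1)]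
    push_cast
    field_simp
    ring
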